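/- Let f : ℝ^m → ℝ be differentiable, L-smooth (its gradient is L-Lipschitz) with L > 0, satisfy the Polyak–Łojasiewicz condition with constant ν > 0 relative to its infimum f* (assumed attained), and let 0 < δ ≤ 1/L. Then for every x, the gradient descent step y = x - δ∇f(x) satisfies f(y) - f* ≤ (1 - δν)(f(x) - f*). -/

import Mathlib

open InnerProductSpace

lemma descent_lemma {m : ℕ} (f : EuclideanSpace ℝ (Fin m) → ℝ) (L : ℝ)
    (hdiff : Differentiable ℝ f)
    (hsmooth : ∀ x y, ‖gradient f x - gradient f y‖ ≤ L * ‖x - y‖)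
    (x v : EuclideanSpace ℝ (Fin m)) :
    f (x + v) ≤ f x + inner ℝ (gradient f x) v + L / 2 * ‖v‖ ^ 2 := by
  set g : ℝ → ℝ := fun t => f (x + t • v) - t * inner ℝ (gradient f x) v - L * t ^ 2 / 2 * ‖v‖ ^ 2
    with hg
  have hderiv : ∀ t : ℝ, HasDerivAt g
      ((inner ℝ (gradient f (x + t • v)) v : ℝ) - inner ℝ (gradient f x) v - L * t * ‖v‖ ^ 2) t := by
    intro t
    have hc : HasDerivAt (fun t : ℝ => x + t • v) v t := by
      simpa using ((hasDerivAt_id t).smul_const v).const_add x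
    have hf : HasFDerivAt f (fderiv ℝ f (x + t • v)) (x + t • v) :=
      (hdiff (x + t • v)).hasFDerivAt
    have h1 : HasDerivAt (fun t : ℝ => f (x + t • v))
        ((fderiv ℝ f (x + t • v)) v) t := hf.comp_hasDerivAt t hc
    have hval : (fderiv ℝ f (x + t • v)) v = inner ℝ (gradient f (x + t • v)) v := by
      have := (hdiff (x + t • v)).hasGradientAt (f := f)
      rw [HasGradientAt, HasGradientAtFilter] at this
      have h2 : fderiv ℝ f (x + t • v) = toDual ℝ _ (gradient f (x + t • v)) :=
        ((hdiff (x + t • v)).hasFDerivAt.unique this)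
      rw [h2]; rfl
    rw [hval] at h1
    have h2 : HasDerivAt (fun t : ℝ => t * (inner ℝ (gradient f x) v : ℝ))
        (inner ℝ (gradient f x) v) t := by simpa using (hasDerivAt_id t).mul_const _
    have h3 : HasDerivAt (fun t : ℝ => L * t ^ 2 / 2 * ‖v‖ ^ 2)
        (L * t * ‖v‖ ^ 2) t := by
      have : HasDerivAt (fun t : ℝ => t ^ 2) (2 * t) t := by
        simpa using hasDerivAt_pow 2 t
      have := ((this.const_mul L).div_const 2).mul_const (‖v‖ ^ 2)
      exact this.congr_deriv (by ring)
    exact (h1.sub h2).sub h3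
  have hanti : AntitoneOn g (Set.Icc (0:ℝ) 1) := by
    apply antitoneOn_of_deriv_nonpos (convex_Icc 0 1)
    · exact Continuous.continuousOn (by
        have := hdiff.continuous; rw [hg]; fun_prop)
    · exact fun t _ => (hderiv t).differentiableAt.differentiableWithinAt
    · intro t ht
      rw [interior_Icc] at ht
      rw [(hderiv t).deriv]
      have h1 : (inner ℝ (gradient f (x + t • v)) v : ℝ) - inner ℝ (gradient f x) v
          ≤ L * t * ‖v‖ ^ 2 := by
        calc (inner ℝ (gradient f (x + t • v)) v : ℝ) - inner ℝ (gradient f x) v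
            = inner ℝ (gradient f (x + t • v) - gradient f x) v := by
              rw [inner_sub_left]
          _ ≤ ‖gradient f (x + t • v) - gradient f x‖ * ‖v‖ := real_inner_le_norm _ _
          _ ≤ (L * ‖(x + t • v) - x‖) * ‖v‖ := by
              gcongr; exact hsmooth _ _
          _ = L * t * ‖v‖ ^ 2 := by
              rw [add_sub_cancel_left, norm_smul, Real.norm_eq_abs,
                abs_of_pos ht.1]; ring
      linarith
  have h01 := hanti (Set.left_mem_Icc.2 zero_le_one) (Set.right_mem_Icc.2 zero_le_one)
    zero_le_one
  simp only [hg, zero_smul, add_zero, zero_mul, one_smul, one_mul, mul_one, one_pow,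
    sub_zero] at h01
  nlinarith [h01]

theorem gd_pl_linear_decrease {m : ℕ} (f : EuclideanSpace ℝ (Fin m) → ℝ)
    (L ν δ fstar : ℝ)
    (hdiff : Differentiable ℝ f) (hL : 0 < L)
    (hsmooth : ∀ x y, ‖gradient f x - gradient f y‖ ≤ L * ‖x - y‖)
    (hν : 0 < ν)
    (hmin : ∀ x, fstar ≤ f x) (hatt : ∃ x, f x = fstar)
    (hPL : ∀ x, ν * (f x - fstar) ≤ (1 / 2) * ‖gradient f x‖ ^ 2)
    (hδ : 0 < δ) (hδL : δ ≤ 1 / L) :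
    ∀ x, f (x - δ • gradient f x) - fstar ≤ (1 - δ * ν) * (f x - fstar) := by
  intro x
  have key := descent_lemma f L hdiff hsmooth x (-(δ • gradient f x))
  rw [← sub_eq_add_neg] at key
  have hinner : (inner ℝ (gradient f x) (-(δ • gradient f x)) : ℝ)
      = -δ * ‖gradient f x‖ ^ 2 := by
    rw [inner_neg_right, real_inner_smul_right, real_inner_self_eq_norm_sq]; ring
  have hnorm : ‖-(δ • gradient f x)‖ ^ 2 = δ ^ 2 * ‖gradient f x‖ ^ 2 := by
    rw [norm_neg, norm_smul, Real.norm_eq_abs, mul_pow, sq_abs]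
  rw [hinner, hnorm] at key
  have hLδ : L * δ ≤ 1 := by
    have : L * δ ≤ L * (1 / L) := by gcongr
    rwa [mul_one_div_cancel hL.ne'] at this
  have hPLx := hPL x
  have hg2 : (0:ℝ) ≤ ‖gradient f x‖ ^ 2 := sq_nonneg _
  nlinarith [hmin x, sq_nonneg ‖gradient f x‖]
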